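/- arXiv:2308.04334 — 4 statements merged into one kernel-verified Lean document; each statement's English description precedes it below -/
import Mathlib

section
/- The map ∂ defined on basis elements e_J (for J ⊆ [d]) by ∂(e_J) = Σ_{j∈J} (-1)^{s(J,j)} C(w(J,j), w'(J,j)) e_{J∖{j}} satisfies ∂∘∂ = 0, i.e., C_•(w_0,...,w_d) is a chain complex. -/
/-!
The arithmetic complex `C_•(w_0,…,w_d)`.

Edges of the path graph are labeled `1,…,d`; edge `i` joins vertices `i-1` and `i`
(vertices are `0,…,d`, with weights `w 0, …, w d`).  A subset `J ⊆ {1,…,d}` cuts the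
path along the edges *not* in `J`, decomposing it into intervals.
-/

/-- The left endpoint (vertex) of the interval containing edge `j` in the decomposition
determined by `J`: the least vertex `v` such that all edges strictly between `v` and `j`
belong to `J`. -/
noncomputable def ivLeft (J : Finset ℕ) (j : ℕ) : ℕ :=
  sInf {v : ℕ | ∀ k ∈ Finset.Ioo v j, k ∈ J}

/-- The right endpoint (vertex) of the interval containing edge `j`. -/
noncomputable def ivRight (d : ℕ) (J : Finset ℕ) (j : ℕ) : ℕ :=
  sSup {v : ℕ | v ≤ d ∧ ∀ k ∈ Finset.Ioc j v, k ∈ J}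

/-- `w(J,j)`: the total weight of the interval containing edge `j`. -/
noncomputable def wtTot (w : ℕ → ℕ) (d : ℕ) (J : Finset ℕ) (j : ℕ) : ℕ :=
  ∑ v ∈ Finset.Icc (ivLeft J j) (ivRight d J j), w v

/-- `w'(J,j)`: the weight of the left subinterval obtained by removing edge `j`. -/
noncomputable def wtL (w : ℕ → ℕ) (J : Finset ℕ) (j : ℕ) : ℕ :=
  ∑ v ∈ Finset.Icc (ivLeft J j) (j - 1), w v

/-- `s(J,j) = #{i : i < j, i ∉ J}`. -/
def sgn (J : Finset ℕ) (j : ℕ) : ℕ :=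
  ((Finset.Ico 1 j).filter (fun i => i ∉ J)).card

/-- The differential of the arithmetic complex `C_•(w_0,…,w_d)`, on the free vector
space with basis `e_J` indexed by subsets `J ⊆ {1,…,d}`:
`∂(e_J) = ∑_{j ∈ J} (-1)^{s(J,j)} C(w(J,j), w'(J,j)) e_{J∖{j}}`. -/
noncomputable def bnd (K : Type*) [Field K] (w : ℕ → ℕ) (d : ℕ) :
    ({J : Finset ℕ // J ⊆ Finset.Icc 1 d} →₀ K) →ₗ[K]
    ({J : Finset ℕ // J ⊆ Finset.Icc 1 d} →₀ K) :=
  Finsupp.lsum K fun J =>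
    LinearMap.toSpanSingleton K _
      (∑ j ∈ J.1, ((-1 : K) ^ sgn J.1 j * ((wtTot w d J.1 j).choose (wtL w J.1 j) : K)) •
        Finsupp.single ⟨J.1.erase j, fun x hx => J.2 (Finset.mem_of_mem_erase hx)⟩ (1 : K))

/-!
In `∂∂(e_J)` the term `e_{J∖{i,j}}`, `i < j`, arises twice, removing `i` or `j` first. Removing
`i` first raises `s(·, j)` by one, while removing `j` first leaves `s(·, i)` unchanged, so the
signs are opposite; it remains to see that the binomial factors agree. The edge `i` lies in the
interval `[L, R]` of `j` iff `L = ivLeft J j < i`. If not, each removal leaves the interval of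
the other edge untouched. If so, `i` and `j` cut `[L, R]` into blocks of weights `a, b, c`, and
the two orders give `C(a+b+c, a+b) C(a+b, a) = C(a+b+c, a) C(b+c, b)`.
-/

section Intervals

open Finset

variable {J : Finset ℕ} {d i j k m v : ℕ}

lemma ivLeft_le (h : ∀ k ∈ Ioo v j, k ∈ J) : ivLeft J j ≤ v := Nat.sInf_le h

lemma mem_of_ivLeft_lt (hk : ivLeft J j < k) (hkj : k < j) : k ∈ J :=
  Nat.sInf_mem (s := {v : ℕ | ∀ k ∈ Ioo v j, k ∈ J})
    ⟨j, fun k hk => by simp only [mem_Ioo] at hk; omega⟩ k (mem_Ioo.2 ⟨hk, hkj⟩)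

lemma ivLeft_lt (hj : 0 < j) : ivLeft J j < j :=
  Nat.lt_of_le_sub_one hj (ivLeft_le fun k hk => by simp only [mem_Ioo] at hk; omega)

lemma ivLeft_notMem (h : 0 < ivLeft J j) : ivLeft J j ∉ J := by
  intro hmem
  have : ivLeft J j ≤ ivLeft J j - 1 := ivLeft_le fun k hk => by
    simp only [mem_Ioo] at hk
    obtain rfl | hk' := (show ivLeft J j ≤ k by omega).eq_or_lt
    exacts [hmem, mem_of_ivLeft_lt hk' hk.2]
  omega

lemma ivLeft_eq (hvj : v < j) (hJ : ∀ k ∈ Ioo v j, k ∈ J) (hv : 0 < v → v ∉ J) :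
    ivLeft J j = v := by
  refine (ivLeft_le hJ).antisymm (not_lt.1 fun hlt => hv (by omega) ?_)
  exact mem_of_ivLeft_lt hlt hvj

lemma ivLeft_erase_of_le (hjm : j ≤ m) : ivLeft (J.erase m) j = ivLeft J j := by
  unfold ivLeft
  congr 1
  ext v
  refine forall₂_congr fun k hk => ?_
  simp only [mem_Ioo] at hk
  simp [mem_erase, show k ≠ m by omega]

lemma ivRight_bddAbove : BddAbove {v : ℕ | v ≤ d ∧ ∀ k ∈ Ioc j v, k ∈ J} :=
  ⟨d, fun _ hv => hv.1⟩

lemma ivRight_mem (hjd : j ≤ d) :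
    ivRight d J j ∈ {v : ℕ | v ≤ d ∧ ∀ k ∈ Ioc j v, k ∈ J} :=
  Nat.sSup_mem ⟨j, hjd, by simp⟩ ivRight_bddAbove

lemma ivRight_le (hjd : j ≤ d) : ivRight d J j ≤ d := (ivRight_mem hjd).1

lemma mem_of_lt_ivRight (hjd : j ≤ d) (hjk : j < k) (hk : k ≤ ivRight d J j) : k ∈ J :=
  (ivRight_mem hjd).2 k (mem_Ioc.2 ⟨hjk, hk⟩)

lemma le_ivRight (hvd : v ≤ d) (hJ : ∀ k ∈ Ioc j v, k ∈ J) : v ≤ ivRight d J j :=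
  le_csSup ivRight_bddAbove ⟨hvd, hJ⟩

lemma le_ivRight_self (hjd : j ≤ d) : j ≤ ivRight d J j :=
  le_ivRight hjd (by simp)

lemma ivRight_add_one_notMem (hjd : j ≤ d) (h : ivRight d J j < d) :
    ivRight d J j + 1 ∉ J := by
  intro hmem
  have : ivRight d J j + 1 ≤ ivRight d J j := le_ivRight h fun k hk => by
    simp only [mem_Ioc] at hk
    obtain hk' | rfl := (show k ≤ ivRight d J j + 1 by omega).lt_or_eq
    exacts [mem_of_lt_ivRight hjd hk.1 (by omega), hmem]
  omega

lemma ivRight_eq (hjv : j ≤ v) (hvd : v ≤ d) (hJ : ∀ k ∈ Ioc j v, k ∈ J)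
    (hv : v < d → v + 1 ∉ J) : ivRight d J j = v := by
  have hjd : j ≤ d := hjv.trans hvd
  refine le_antisymm (not_lt.1 fun hlt => ?_) (le_ivRight hvd hJ)
  exact hv ((ivRight_le hjd).trans_lt' hlt) (mem_of_lt_ivRight hjd (by omega) hlt)

lemma ivRight_erase_of_le (hmj : m ≤ j) : ivRight d (J.erase m) j = ivRight d J j := by
  unfold ivRight
  congr 1
  ext v
  refine and_congr_right fun _ => forall₂_congr fun k hk => ?_
  simp only [mem_Ioc] at hk
  simp [mem_erase, show k ≠ m by omega]

end Intervals

section Splitting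

open Finset

variable {J : Finset ℕ} {d i j : ℕ}

lemma ivLeft_eq_of_ivLeft_lt (hij : i < j) (hLi : ivLeft J j < i) : ivLeft J i = ivLeft J j :=
  ivLeft_eq hLi (fun _ hk => mem_of_ivLeft_lt (mem_Ioo.1 hk).1 ((mem_Ioo.1 hk).2.trans hij))
    ivLeft_notMem

lemma ivRight_eq_of_ivLeft_lt (hjJ : j ∈ J) (hjd : j ≤ d) (hij : i < j)
    (hLi : ivLeft J j < i) : ivRight d J i = ivRight d J j := by
  refine ivRight_eq (hij.le.trans (le_ivRight_self hjd)) (ivRight_le hjd) (fun k hk => ?_)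
    (ivRight_add_one_notMem hjd)
  simp only [mem_Ioc] at hk
  rcases lt_trichotomy k j with hkj | rfl | hjk
  exacts [mem_of_ivLeft_lt (by omega) hkj, hjJ, mem_of_lt_ivRight hjd hjk hk.2]

lemma ivRight_erase_eq_of_ivLeft_lt (hjd : j ≤ d) (hij : i < j) (hLi : ivLeft J j < i) :
    ivRight d (J.erase j) i = j - 1 := by
  refine ivRight_eq (by omega) (by omega) (fun k hk => ?_)
    (fun _ => by rw [Nat.sub_one_add_one (by omega)]; exact notMem_erase j J)
  simp only [mem_Ioc] at hk
  exact mem_erase.2 ⟨by omega, mem_of_ivLeft_lt (j := j) (by omega) (by omega)⟩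

lemma ivLeft_erase_eq_of_ivLeft_lt (hij : i < j) (hLi : ivLeft J j < i) :
    ivLeft (J.erase i) j = i := by
  refine ivLeft_eq hij (fun k hk => ?_) (fun _ => notMem_erase i J)
  simp only [mem_Ioo] at hk
  exact mem_erase.2 ⟨by omega, mem_of_ivLeft_lt (by omega) hk.2⟩

lemma ivRight_erase_eq_of_lt_ivLeft (hjd : j ≤ d) (hij : i < j) (hiL : i < ivLeft J j) :
    ivRight d (J.erase j) i = ivRight d J i := by
  have hid : i ≤ d := by omega
  have hRL : ivRight d J i < ivLeft J j := not_le.1 fun h =>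
    ivLeft_notMem (by omega) (mem_of_lt_ivRight hid hiL h)
  have hLj : ivLeft J j < j := ivLeft_lt (by omega)
  refine ivRight_eq (le_ivRight_self hid) (ivRight_le hid) (fun k hk => ?_) (fun h hmem => ?_)
  · simp only [mem_Ioc] at hk
    exact mem_erase.2 ⟨by omega, mem_of_lt_ivRight hid hk.1 hk.2⟩
  · exact ivRight_add_one_notMem hid h (mem_of_mem_erase hmem)

lemma ivLeft_erase_eq_of_lt_ivLeft (hiL : i < ivLeft J j) :
    ivLeft (J.erase i) j = ivLeft J j := by
  have hij : i < j := hiL.trans_le (ivLeft_le (by simp))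
  refine ivLeft_eq (ivLeft_lt (by omega)) (fun k hk => ?_)
    (fun h hmem => ivLeft_notMem h (mem_of_mem_erase hmem))
  simp only [mem_Ioo] at hk
  exact mem_erase.2 ⟨by omega, mem_of_ivLeft_lt hk.1 hk.2⟩

end Splitting

section Weights

open Finset

variable {w : ℕ → ℕ} {J : Finset ℕ} {d i j : ℕ}

lemma wtTot_eq_sum_Ico :
    wtTot w d J j = ∑ v ∈ Ico (ivLeft J j) (ivRight d J j + 1), w v := by
  rw [wtTot, Ico_add_one_right_eq_Icc]

lemma wtL_eq_sum_Ico (hj : 0 < j) : wtL w J j = ∑ v ∈ Ico (ivLeft J j) j, w v := by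
  rw [wtL, ← Ico_add_one_right_eq_Icc, Nat.sub_one_add_one hj.ne']

lemma Nat.add_add_choose_mul_choose (a b c : ℕ) :
    (a + b + c).choose (a + b) * (a + b).choose a = (a + b + c).choose a * (b + c).choose b := by
  rw [Nat.choose_mul (Nat.le_add_right a b)]
  congr 2 <;> omega

lemma choose_wt_mul_comm_of_ivLeft_lt (hjJ : j ∈ J) (hjd : j ≤ d) (hi : 0 < i) (hij : i < j)
    (hLi : ivLeft J j < i) :
    (wtTot w d J j).choose (wtL w J j) * (wtTot w d (J.erase j) i).choose (wtL w (J.erase j) i)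
      = (wtTot w d J i).choose (wtL w J i) *
        (wtTot w d (J.erase i) j).choose (wtL w (J.erase i) j) := by
  have hj : 0 < j := hi.trans hij
  simp only [wtTot_eq_sum_Ico, wtL_eq_sum_Ico hi, wtL_eq_sum_Ico hj, ivLeft_erase_of_le hij.le,
    ivLeft_eq_of_ivLeft_lt hij hLi, ivRight_eq_of_ivLeft_lt hjJ hjd hij hLi,
    ivRight_erase_eq_of_ivLeft_lt hjd hij hLi, Nat.sub_add_cancel hj,
    ivLeft_erase_eq_of_ivLeft_lt hij hLi, ivRight_erase_of_le hij.le]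
  have hjR1 : j ≤ ivRight d J j + 1 := (le_ivRight_self hjd).step
  rw [← sum_Ico_consecutive w hij.le hjR1, ← sum_Ico_consecutive w (hLi.trans hij).le hjR1,
    ← sum_Ico_consecutive w hLi.le hij.le, Nat.add_add_choose_mul_choose]

lemma choose_wt_mul_comm_of_lt_ivLeft (hjd : j ≤ d) (hij : i < j) (hiL : i < ivLeft J j) :
    (wtTot w d J j).choose (wtL w J j) * (wtTot w d (J.erase j) i).choose (wtL w (J.erase j) i)
      = (wtTot w d J i).choose (wtL w J i) *
        (wtTot w d (J.erase i) j).choose (wtL w (J.erase i) j) := by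
  simp only [wtTot, wtL, ivLeft_erase_of_le hij.le, ivRight_erase_eq_of_lt_ivLeft hjd hij hiL,
    ivLeft_erase_eq_of_lt_ivLeft hiL, ivRight_erase_of_le hij.le]
  exact Nat.mul_comm _ _

lemma choose_wt_mul_comm (hJ : J ⊆ Icc 1 d) (hiJ : i ∈ J) (hjJ : j ∈ J) (hij : i < j) :
    (wtTot w d J j).choose (wtL w J j) * (wtTot w d (J.erase j) i).choose (wtL w (J.erase j) i)
      = (wtTot w d J i).choose (wtL w J i) *
        (wtTot w d (J.erase i) j).choose (wtL w (J.erase i) j) := by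
  obtain ⟨hi, -⟩ := mem_Icc.1 (hJ hiJ)
  obtain ⟨-, hjd⟩ := mem_Icc.1 (hJ hjJ)
  rcases lt_or_ge (ivLeft J j) i with hLi | hiL
  · exact choose_wt_mul_comm_of_ivLeft_lt hjJ hjd hi hij hLi
  · exact choose_wt_mul_comm_of_lt_ivLeft hjd hij <|
      hiL.lt_of_ne fun h => ivLeft_notMem (h ▸ hi) (h ▸ hiJ)

end Weights

section Signs

open Finset

variable {J : Finset ℕ} {i j m : ℕ}

lemma sgn_erase_of_le (hjm : j ≤ m) : sgn (J.erase m) j = sgn J j := by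
  unfold sgn
  congr 1
  refine filter_congr fun k hk => ?_
  simp only [mem_Ico] at hk
  simp [mem_erase, show k ≠ m by omega]

lemma sgn_erase_of_lt (hi : 0 < i) (hij : i < j) (hiJ : i ∈ J) :
    sgn (J.erase i) j = sgn J j + 1 := by
  unfold sgn
  have : {k ∈ Ico 1 j | k ∉ J.erase i} = insert i {k ∈ Ico 1 j | k ∉ J} := by
    ext k
    simp only [mem_filter, mem_insert, mem_erase, mem_Ico]
    grind
  rw [this, card_insert_of_notMem (by simp [hiJ])]

end Signs

noncomputable def bndCoeff (K : Type*) [Field K] (w : ℕ → ℕ) (d : ℕ) (J : Finset ℕ) (j : ℕ) : K :=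
  (-1) ^ sgn J j * ((wtTot w d J j).choose (wtL w J j) : K)

lemma bndCoeff_mul_add_swap (K : Type*) [Field K] (w : ℕ → ℕ) {d : ℕ} {J : Finset ℕ}
    (hJ : J ⊆ Finset.Icc 1 d) {i j : ℕ} (hiJ : i ∈ J) (hjJ : j ∈ J) (hij : i < j) :
    bndCoeff K w d J j * bndCoeff K w d (J.erase j) i +
      bndCoeff K w d J i * bndCoeff K w d (J.erase i) j = 0 := by
  have hi : 0 < i := (Finset.mem_Icc.1 (hJ hiJ)).1
  have hchoose := congrArg (Nat.cast (R := K)) (choose_wt_mul_comm (w := w) hJ hiJ hjJ hij)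
  push_cast at hchoose
  simp only [bndCoeff, sgn_erase_of_le hij.le, sgn_erase_of_lt hi hij hiJ, pow_succ]
  linear_combination (-1 : K) ^ sgn J j * (-1 : K) ^ sgn J i * hchoose

lemma Finset.sum_sum_erase_eq_zero {ι M : Type*} [DecidableEq ι] [AddCommMonoid M]
    (s : Finset ι) (F : ι → ι → M) (hF : ∀ i ∈ s, ∀ j ∈ s, i ≠ j → F i j + F j i = 0) :
    ∑ i ∈ s, ∑ j ∈ s.erase i, F i j = 0 := by
  rw [← sum_finset_product' s.offDiag s (fun i => s.erase i) (by simp; tauto)]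
  refine sum_involution (fun p _ => p.swap) (fun p hp => ?_) (fun p hp _ => ?_)
    (fun p hp => by simp_all [eq_comm]) (by simp)
  · obtain ⟨hi, hj, hij⟩ := mem_offDiag.1 hp
    exact hF _ hi _ hj hij
  · obtain ⟨-, -, hij⟩ := mem_offDiag.1 hp
    exact fun h => hij (congrArg Prod.fst h).symm

lemma bnd_single (K : Type*) [Field K] (w : ℕ → ℕ) {d : ℕ}
    (J : {J : Finset ℕ // J ⊆ Finset.Icc 1 d}) (b : K) :
    bnd K w d (Finsupp.single J b) = ∑ j ∈ J.1, (b * bndCoeff K w d J.1 j) •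
      Finsupp.single ⟨J.1.erase j, (Finset.erase_subset j J.1).trans J.2⟩ 1 := by
  simp only [bnd, Finsupp.lsum_single, LinearMap.toSpanSingleton_apply, Finset.smul_sum, smul_smul,
    bndCoeff]

theorem bnd_comp_bnd_general (K : Type*) [Field K] (w : ℕ → ℕ) (d : ℕ) :
    (bnd K w d).comp (bnd K w d) = 0 := by
  classical
  refine Finsupp.lhom_ext fun J b => ?_
  simp only [LinearMap.comp_apply, bnd_single, map_sum, map_smul, Finset.smul_sum, smul_smul,
    LinearMap.zero_apply]
  refine Finset.sum_sum_erase_eq_zero _ _ fun j hj i hi hji => ?_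
  simp only [Finset.erase_right_comm (a := j) (b := i), ← add_smul]
  refine smul_eq_zero_of_left ?_ _
  rcases hji.lt_or_gt with hlt | hlt
  · linear_combination b * bndCoeff_mul_add_swap K w J.2 hj hi hlt
  · linear_combination b * bndCoeff_mul_add_swap K w J.2 hi hj hlt

/-- `∂ ∘ ∂ = 0`, i.e. `C_•(w_0,…,w_d)` is a chain complex. -/
theorem bnd_comp_bnd (K : Type*) [Field K] (w : ℕ → ℕ) (d : ℕ) (hd : 1 ≤ d) :
    (bnd K w d).comp (bnd K w d) = 0 :=
  bnd_comp_bnd_general K w d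
end

section
/- With w_0 = w_1 = w_2 = w_3 = 1, the complex C_• is the four-term complex 0 → k → k³ → k³ → k → 0 with differentials given by matrices [4,6,4]^T, [[-3,2,0],[-3,0,3],[0,-2,3]], and [2,-2,2]; this complex is exact if char(k) = 0 or char(k) ≥ 5, and has nontrivial homology when char(k) = 2 or 3. -/
/-!
When `2` and `3` are invertible, exactness is checked by hand at each spot: a cycle `v` of `d₂`
satisfies `v₀ = v₂` and `2 v₁ = 3 v₀`, so it is `d₃ (v₀ / 4)`; a cycle of `d₁` satisfies
`v₂ = v₁ - v₀`, so it is `d₂ (0, v₀ / 2, v₁ / 3)`. In characteristic `2` all entries of `d₃`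
vanish. In characteristic `3`, `(1, 0, 0)` is a cycle of `d₂` but not a boundary, since the first
and last coordinates of `d₃ c = (4c, 6c, 4c)` agree in every ring.
-/

open Matrix

namespace C1111

theorem natCast_ne_zero_of_lt_ringChar {R : Type*} [NonAssocSemiring R] {n : ℕ} (hn : 0 < n)
    (h : ringChar R = 0 ∨ n < ringChar R) : (n : R) ≠ 0 := by
  rw [Ne, ringChar.spec]
  intro hdvd
  rcases h with h | h
  · rw [h, zero_dvd_iff] at hdvd
    omega
  · exact absurd (Nat.le_of_dvd hn hdvd) (by omega)

theorem four_ne_zero_of_two_ne_zero {R : Type*} [NonAssocSemiring R] [NoZeroDivisors R]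
    (h2 : (2 : R) ≠ 0) : (4 : R) ≠ 0 := by
  rw [← two_add_two_eq_four, ← two_mul]
  exact mul_ne_zero h2 h2

section CommRing

variable (R : Type*) [CommRing R]

def d₃ : (Fin 1 → R) →ₗ[R] (Fin 3 → R) := Matrix.mulVecLin !![(4 : R); 6; 4]

def d₂ : (Fin 3 → R) →ₗ[R] (Fin 3 → R) :=
  Matrix.mulVecLin !![(-3 : R), 2, 0; -3, 0, 3; 0, -2, 3]

def d₁ : (Fin 3 → R) →ₗ[R] (Fin 1 → R) := Matrix.mulVecLin !![(2 : R), -2, 2]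

variable {R}

theorem d₃_apply (x : Fin 1 → R) : d₃ R x = ![4 * x 0, 6 * x 0, 4 * x 0] := by
  ext i
  fin_cases i <;> simp [d₃, mulVec, dotProduct]

theorem d₂_apply (x : Fin 3 → R) :
    d₂ R x = ![-3 * x 0 + 2 * x 1, -3 * x 0 + 3 * x 2, -2 * x 1 + 3 * x 2] := by
  ext i
  fin_cases i <;> simp [d₂, mulVec, dotProduct, Fin.sum_univ_three]

theorem d₁_apply (x : Fin 3 → R) : d₁ R x = ![2 * x 0 - 2 * x 1 + 2 * x 2] := by
  ext i
  fin_cases i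
  simp [d₁, mulVec, dotProduct, Fin.sum_univ_three]
  ring

theorem d₂_comp_d₃ : d₂ R ∘ₗ d₃ R = 0 := by
  ext x i
  fin_cases i <;> simp [d₃_apply, d₂_apply] <;> ring

theorem d₁_comp_d₂ : d₁ R ∘ₗ d₂ R = 0 := by
  ext x i
  fin_cases i
  simp [d₂_apply, d₁_apply]
  ring

theorem d₃_eq_zero_of_two_eq_zero (h2 : (2 : R) = 0) : d₃ R = 0 := by
  have h4 : (4 : R) = 0 := by linear_combination 2 * h2
  have h6 : (6 : R) = 0 := by linear_combination 3 * h2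
  ext x i
  fin_cases i <;> simp [d₃_apply, h4, h6]

theorem d₃_not_injective_of_two_eq_zero [Nontrivial R] (h2 : (2 : R) = 0) :
    ¬Function.Injective (d₃ R) := by
  rw [d₃_eq_zero_of_two_eq_zero h2]
  intro h
  exact zero_ne_one (congrFun (@h 0 1 rfl) 0)

theorem d₂_one_zero_zero (h3 : (3 : R) = 0) : d₂ R ![1, 0, 0] = 0 := by
  ext i
  fin_cases i <;> simp [d₂_apply, h3]

theorem one_zero_zero_notMem_range_d₃ [Nontrivial R] :
    ![(1 : R), 0, 0] ∉ LinearMap.range (d₃ R) := by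
  rintro ⟨c, hc⟩
  have h0 := congrFun hc 0
  have h2 := congrFun hc 2
  simp only [d₃_apply] at h0 h2
  exact one_ne_zero (h0.symm.trans h2)

end CommRing

section Field

variable {K : Type*} [Field K]

theorem d₃_injective (h2 : (2 : K) ≠ 0) : Function.Injective (d₃ K) := by
  intro x y hxy
  have h := congrFun hxy 0
  simp only [d₃_apply, Matrix.cons_val_zero] at h
  ext i
  fin_cases i
  exact mul_left_cancel₀ (four_ne_zero_of_two_ne_zero h2) h

theorem ker_d₂_eq_range_d₃ (h2 : (2 : K) ≠ 0) (h3 : (3 : K) ≠ 0) :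
    LinearMap.ker (d₂ K) = LinearMap.range (d₃ K) := by
  refine le_antisymm (fun v hv => ?_) (LinearMap.range_le_ker_iff.2 d₂_comp_d₃)
  have e0 := congrFun (LinearMap.mem_ker.1 hv) 0
  have e1 := congrFun (LinearMap.mem_ker.1 hv) 1
  simp only [d₂_apply, Matrix.cons_val, Pi.zero_apply] at e0 e1
  have ht : 4 * (v 0 / 4) = v 0 := mul_div_cancel₀ _ (four_ne_zero_of_two_ne_zero h2)
  refine ⟨![v 0 / 4], ?_⟩
  ext i
  fin_cases i <;>
    simp only [Fin.zero_eta, Fin.mk_one, Fin.reduceFinMk, d₃_apply, Fin.isValue, cons_val_fin_one,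
      cons_val_zero, cons_val_one, cons_val]
  · exact ht
  · exact mul_left_cancel₀ h2 (by linear_combination 3 * ht - e0)
  · exact mul_left_cancel₀ h3 (by linear_combination 3 * ht - e1)

theorem ker_d₁_eq_range_d₂ (h2 : (2 : K) ≠ 0) (h3 : (3 : K) ≠ 0) :
    LinearMap.ker (d₁ K) = LinearMap.range (d₂ K) := by
  refine le_antisymm (fun v hv => ?_) (LinearMap.range_le_ker_iff.2 d₁_comp_d₂)
  have e0 := congrFun (LinearMap.mem_ker.1 hv) 0
  simp only [d₁_apply, Matrix.cons_val, Pi.zero_apply] at e0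
  have hb : 2 * (v 0 / 2) = v 0 := mul_div_cancel₀ _ h2
  have hc : 3 * (v 1 / 3) = v 1 := mul_div_cancel₀ _ h3
  refine ⟨![0, v 0 / 2, v 1 / 3], ?_⟩
  ext i
  fin_cases i <;>
    simp only [Fin.zero_eta, Fin.mk_one, Fin.reduceFinMk, d₂_apply, Fin.isValue, cons_val_zero,
      cons_val_one, cons_val, mul_zero, zero_add, neg_mul]
  · exact hb
  · exact hc
  · exact mul_left_cancel₀ h2 (by linear_combination 2 * hc - 2 * hb - e0)

theorem d₁_surjective (h2 : (2 : K) ≠ 0) : Function.Surjective (d₁ K) := by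
  intro y
  refine ⟨![y 0 / 2, 0, 0], ?_⟩
  ext i
  fin_cases i
  simp [d₁_apply]
  exact mul_div_cancel₀ _ h2

end Field

end C1111

open C1111 in
/-- for `w_0 = w_1 = w_2 = w_3 = 1`, the complex `C_•` is the four-term
complex `0 → k → k³ → k³ → k → 0` with differentials `[4,6,4]ᵀ`,
`[[-3,2,0],[-3,0,3],[0,-2,3]]` and `[2,-2,2]`.  It is a complex, it is exact when
`char k = 0` or `char k ≥ 5`, and it has nontrivial homology when `char k ∈ {2,3}`. -/
theorem C1111_exactness (K : Type*) [Field K] :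
    let d3 : (Fin 1 → K) →ₗ[K] (Fin 3 → K) := Matrix.mulVecLin !![(4 : K); 6; 4]
    let d2 : (Fin 3 → K) →ₗ[K] (Fin 3 → K) :=
      Matrix.mulVecLin !![(-3 : K), 2, 0; -3, 0, 3; 0, -2, 3]
    let d1 : (Fin 3 → K) →ₗ[K] (Fin 1 → K) := Matrix.mulVecLin !![(2 : K), -2, 2]
    (d2.comp d3 = 0 ∧ d1.comp d2 = 0) ∧
    ((ringChar K = 0 ∨ 5 ≤ ringChar K) →
      (Function.Injective d3 ∧ LinearMap.ker d2 = LinearMap.range d3 ∧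
        LinearMap.ker d1 = LinearMap.range d2 ∧ Function.Surjective d1)) ∧
    ((ringChar K = 2 ∨ ringChar K = 3) →
      ¬(Function.Injective d3 ∧ LinearMap.ker d2 = LinearMap.range d3 ∧
        LinearMap.ker d1 = LinearMap.range d2 ∧ Function.Surjective d1)) := by
  intro d3 d2 d1
  refine ⟨⟨d₂_comp_d₃, d₁_comp_d₂⟩, fun h => ?_, ?_⟩
  · have h2 : ((2 : ℕ) : K) ≠ 0 := natCast_ne_zero_of_lt_ringChar two_pos (by omega)
    have h3 : ((3 : ℕ) : K) ≠ 0 := natCast_ne_zero_of_lt_ringChar three_pos (by omega)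
    push_cast at h2 h3
    exact ⟨d₃_injective h2, ker_d₂_eq_range_d₃ h2 h3, ker_d₁_eq_range_d₂ h2 h3, d₁_surjective h2⟩
  · rintro (h | h) ⟨hinj, hker, -, -⟩
    · have h2 : ((2 : ℕ) : K) = 0 := h ▸ ringChar.Nat.cast_ringChar
      push_cast at h2
      exact d₃_not_injective_of_two_eq_zero h2 hinj
    · have h3 : ((3 : ℕ) : K) = 0 := h ▸ ringChar.Nat.cast_ringChar
      push_cast at h3
      exact one_zero_zero_notMem_range_d₃ (hker ▸ LinearMap.mem_ker.2 (d₂_one_zero_zero h3))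
end

section
/- The Schur polynomial identity s_{(a,b)} = h_a·h_b − h_{a+1}·h_{b-1} holds in Z[t_1,...,t_n], where s_{(a,b)} = Σ_{T ∈ Tab_n(a,b)} t^T, and furthermore h_a·h_b = Σ_{i=0}^{b} s_{(a+b-i,i)} for a ≥ b (Pieri's rule for two-row shapes). -/
/-!
Write `h_d` as the sum of `t^u` over the weakly increasing rows `u` of length `d`. Then `h_a h_b`
is a sum over pairs of rows `(u, v)`, and `s_{(a,b)}` is the part of it where every column is
strict. A pair that is not a tableau has a first column `k` with `v_k ≤ u_k`; exchanging the
initial segments `u_0 … u_{k-1}` and `v_0 … v_k` gives a pair of weakly increasing rows of lengths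
`a + 1` and `b - 1` with the same entries. This is a bijection onto all such pairs: the inverse cuts
at the first column `k` with `u'_k ≤ v'_k`, or at `k = b - 1` if there is none. Hence
`h_a h_b - s_{(a,b)} = h_{a+1} h_{b-1}`, and Pieri's rule follows by telescoping.
-/

open MvPolynomial

/-- The `q`-truncated complete homogeneous symmetric polynomial
`h^{(q)}_d = ∑_{i_1+⋯+i_n = d, 0 ≤ i_j < q} t_1^{i_1} ⋯ t_n^{i_n}`. -/
noncomputable def hq (n q d : ℕ) : MvPolynomial (Fin n) ℤ :=
  ∑ c ∈ (Fintype.piFinset fun _ : Fin n => Finset.range q).filter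
      (fun c => ∑ i, c i = d), ∏ i, X i ^ c i

/-- The complete homogeneous symmetric polynomial `h_d` in `n` variables. -/
noncomputable def hh (n d : ℕ) : MvPolynomial (Fin n) ℤ := hq n (d + 1) d

/-- `h_d` extended to integer indices by `h_d = 0` for `d < 0`. -/
noncomputable def hhZ (n : ℕ) (d : ℤ) : MvPolynomial (Fin n) ℤ :=
  if 0 ≤ d then hh n d.toNat else 0

open Classical in
/-- The sum `∑_{T ∈ Tab_n(a,b)} t^T` over semi-standard Young tableaux of shape `(a,b)`
with entries in `{1,…,n}`: a tableau is a pair of rows `u : Fin a → Fin n` (weakly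
increasing), `v : Fin b → Fin n` (weakly increasing), with strictly increasing columns
`u_i < v_i`; the monomial `t^T` is the product of the variables of all entries. -/
noncomputable def schurTab (n a b : ℕ) : MvPolynomial (Fin n) ℤ :=
  ∑ T ∈ (Finset.univ : Finset ((Fin a → Fin n) × (Fin b → Fin n))).filter
      (fun T => Monotone T.1 ∧ Monotone T.2 ∧
        ∀ (i : ℕ) (hb : i < b) (ha : i < a), T.1 ⟨i, ha⟩ < T.2 ⟨i, hb⟩),
    (∏ i, X (T.1 i)) * ∏ j, X (T.2 j)

open Finset

theorem hh_eq_hsymm (n d : ℕ) : hh n d = hsymm (Fin n) ℤ d := by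
  classical
  have hmem : ∀ c : Fin n → ℕ, c ∈ (Fintype.piFinset fun _ => range (d + 1)).filter
      (fun c => ∑ i, c i = d) ↔ ∑ i, c i = d := by
    intro c
    simp only [mem_filter, Fintype.mem_piFinset, mem_range, and_iff_right_iff_imp]
    intro hc i
    have := hc ▸ single_le_sum (fun j _ => Nat.zero_le (c j)) (mem_univ i)
    omega
  let e := Sym.equivNatSumOfFintype (Fin n) d
  symm
  refine sum_bij' (fun s _ => (e s).1) (fun c hc => e.symm ⟨c, (hmem c).1 hc⟩)
    (fun s _ => (hmem _).2 (e s).2) (fun _ _ => mem_univ _) (fun s _ => by simp)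
    (fun c _ => by simp) fun s _ => ?_
  rw [prod_multiset_map_count, prod_subset (subset_univ _)]
  · rfl
  · intro i _ hi
    rw [Multiset.mem_toFinset, ← Multiset.count_eq_zero] at hi
    rw [hi, pow_zero]

theorem hsymm_eq_sum_monotone {σ R : Type*} [Fintype σ] [LinearOrder σ] [CommSemiring R]
    (d : ℕ) : hsymm σ R d = ∑ u ∈ {u : Fin d → σ | Monotone u}, ∏ i, X (u i) := by
  classical
  symm
  refine sum_nbij (fun u => ⟨List.ofFn u, (Multiset.coe_card _).trans List.length_ofFn⟩)
    (fun _ _ => mem_univ _) ?_ ?_ ?_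
  · intro u hu w hw huw
    simp only [coe_filter, mem_univ, true_and, Set.mem_ofPred_eq] at hu hw
    have hperm : (List.ofFn u).Perm (List.ofFn w) :=
      Multiset.coe_eq_coe.mp (congrArg Subtype.val huw)
    exact List.ofFn_injective (hperm.eq_of_sortedLE hu.sortedLE_ofFn hw.sortedLE_ofFn)
  · intro s _
    have hl : (s.1.sort (· ≤ ·)).length = d := by simp [Multiset.length_sort]
    refine ⟨fun i => (s.1.sort (· ≤ ·)).get (i.cast hl.symm), ?_, ?_⟩
    · simp only [coe_filter, Set.mem_ofPred_eq, mem_univ, true_and]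
      exact (Multiset.pairwise_sort _ _).sortedLE.monotone_get.comp
        fun _ _ h => (Fin.cast_le_cast _).2 h
    · ext1
      change ((List.ofFn _ : List σ) : Multiset σ) = s
      rw [← List.ofFn_congr hl, List.ofFn_get, Multiset.sort_eq]
      rfl
  · intro u _
    simp [← List.prod_ofFn, Function.comp_def]

section Splice

variable {α : Type*} {p q r m : ℕ}

/-- The first `m` entries of `f` followed by the last `r - m` entries of `g`. -/
def splice (m : ℕ) (f : Fin p → α) (g : Fin q → α) (hm : m ≤ p) (hr : r ≤ m + q) :
    Fin r → α :=
  fun i => if h : (i : ℕ) < m then f ⟨i, by omega⟩ else g ⟨i + q - r, by omega⟩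

variable {f : Fin p → α} {g : Fin q → α} {hm : m ≤ p} {hr : r ≤ m + q}

theorem splice_of_lt {i : ℕ} (hi : i < r) (him : i < m) :
    splice m f g hm hr ⟨i, hi⟩ = f ⟨i, by omega⟩ :=
  dif_pos him

theorem splice_of_le {i : ℕ} (hi : i < r) (him : m ≤ i) :
    splice m f g hm hr ⟨i, hi⟩ = g ⟨i + q - r, by omega⟩ :=
  dif_neg (Nat.not_lt.2 him)

theorem monotone_splice [Preorder α] (hf : Monotone f) (hg : Monotone g)
    (hfg : ∀ (i : Fin p) (j : Fin q), (i : ℕ) < m → m + q ≤ j + r → f i ≤ g j) :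
    Monotone (splice m f g hm hr) := by
  intro x y hxy
  rw [Fin.le_def] at hxy
  simp only [splice]
  split_ifs with hx hy hy
  · exact hf (Fin.mk_le_mk.2 hxy)
  · exact hfg _ _ hx (by simp; omega)
  · omega
  · exact hg (Fin.mk_le_mk.2 (by omega))

theorem ofFn_splice (hmr : m ≤ r) :
    List.ofFn (splice m f g hm hr) = (List.ofFn f).take m ++ (List.ofFn g).drop (m + q - r) := by
  apply List.ext_getElem
  · simp only [List.length_ofFn, List.length_append, List.length_take, List.length_drop,
      min_eq_left hm]
    omega
  · intro i h₁ h₂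
    simp only [List.length_ofFn] at h₁
    rw [List.getElem_ofFn]
    by_cases him : i < m
    · rw [splice_of_lt h₁ him, List.getElem_append_left (by simp; omega), List.getElem_take,
        List.getElem_ofFn]
    · rw [splice_of_le h₁ (by omega), List.getElem_append_right (by simp; omega),
        List.getElem_drop, List.getElem_ofFn]
      congr 2
      simp
      omega

end Splice

section ColumnStrict

variable {α : Type*} [LT α] {p q p' q' r r' m m' k l : ℕ}

def ColumnStrictBefore (u : Fin p → α) (v : Fin q → α) (k : ℕ) : Prop :=
  ∀ i < k, ∀ (hq : i < q) (hp : i < p), u ⟨i, hp⟩ < v ⟨i, hq⟩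

variable {u : Fin p → α} {v : Fin q → α}

theorem ColumnStrictBefore.of_le (h : ColumnStrictBefore u v l) (hkl : k ≤ l) :
    ColumnStrictBefore u v k :=
  fun i hi => h i (by omega)

theorem columnStrictBefore_succ_iff (hq : k < q) (hp : k < p) :
    ColumnStrictBefore u v (k + 1) ↔ ColumnStrictBefore u v k ∧ u ⟨k, hp⟩ < v ⟨k, hq⟩ := by
  refine ⟨fun h => ⟨h.of_le k.le_succ, h k k.lt_succ_self hq hp⟩, fun ⟨h, hk⟩ i hi => ?_⟩
  rcases Nat.lt_succ_iff_lt_or_eq.1 hi with hi | rfl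
  exacts [h i hi, fun _ _ => hk]

theorem ColumnStrictBefore.splice {f : Fin p → α} {g : Fin q → α} {f' : Fin p' → α}
    {g' : Fin q' → α} {hm : m ≤ p} {hr : r ≤ m + q} {hm' : m' ≤ p'} {hr' : r' ≤ m' + q'}
    (h : ColumnStrictBefore f f' k) (hkm : k ≤ m) (hkm' : k ≤ m') :
    ColumnStrictBefore (splice m f g hm hr) (splice m' f' g' hm' hr') k := by
  intro i hi hi₁ hi₂
  rw [splice_of_lt hi₂ (by omega), splice_of_lt hi₁ (by omega)]
  exact h i hi _ _

end ColumnStrict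

section TailSwap

variable {α : Type*} {a b k : ℕ}

def tailSwap (k : ℕ) (hk : k < b) (hba : b ≤ a) (x : (Fin a → α) × (Fin b → α)) :
    (Fin (a + 1) → α) × (Fin (b - 1) → α) :=
  (splice (k + 1) x.2 x.1 (by omega) (by omega), splice k x.1 x.2 (by omega) (by omega))

def tailSwapInv (k : ℕ) (hk : k < b) (hba : b ≤ a) (y : (Fin (a + 1) → α) × (Fin (b - 1) → α)) :
    (Fin a → α) × (Fin b → α) :=
  (splice k y.2 y.1 (by omega) (by omega), splice (k + 1) y.1 y.2 (by omega) (by omega))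

variable {hk : k < b} {hba : b ≤ a}

theorem tailSwapInv_tailSwap (x : (Fin a → α) × (Fin b → α)) :
    tailSwapInv k hk hba (tailSwap k hk hba x) = x := by
  ext i <;> simp only [tailSwap, tailSwapInv, splice] <;> split_ifs <;>
    first | rfl | omega | exact congrArg _ (Fin.ext (by dsimp only; omega))

theorem tailSwap_tailSwapInv (y : (Fin (a + 1) → α) × (Fin (b - 1) → α)) :
    tailSwap k hk hba (tailSwapInv k hk hba y) = y := by
  ext i <;> simp only [tailSwap, tailSwapInv, splice] <;> split_ifs <;>
    first | rfl | omega | exact congrArg _ (Fin.ext (by dsimp only; omega))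

variable [LinearOrder α]

theorem tailSwap_mem {u : Fin a → α} {v : Fin b → α} (hu : Monotone u) (hv : Monotone v)
    (hlt : ColumnStrictBefore u v k) (hge : ¬ColumnStrictBefore u v (k + 1)) :
    Monotone (tailSwap k hk hba (u, v)).1 ∧ Monotone (tailSwap k hk hba (u, v)).2 ∧
      (ColumnStrictBefore (tailSwap k hk hba (u, v)).2 (tailSwap k hk hba (u, v)).1 k ∧ k < b) ∧
      ¬(ColumnStrictBefore (tailSwap k hk hba (u, v)).2 (tailSwap k hk hba (u, v)).1 (k + 1) ∧
        k + 1 < b) := by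
  have hvu : v ⟨k, hk⟩ ≤ u ⟨k, by omega⟩ :=
    not_lt.1 fun h => hge ((columnStrictBefore_succ_iff _ _).2 ⟨hlt, h⟩)
  dsimp only [tailSwap]
  refine ⟨monotone_splice hv hu ?_, monotone_splice hu hv ?_, ⟨hlt.splice le_rfl k.le_succ, hk⟩, ?_⟩
  · intro i j hi hj
    calc v i ≤ v ⟨k, hk⟩ := hv (Fin.mk_le_mk.2 (by omega))
      _ ≤ u ⟨k, by omega⟩ := hvu
      _ ≤ u j := hu (Fin.mk_le_mk.2 (by omega))
  · intro i j hi hj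
    exact (hlt i hi (by omega) i.2).le.trans (hv (Fin.mk_le_mk.2 (by omega)))
  · rintro ⟨h, hkb⟩
    -- column `k` of the swapped pair is `(v_{k+1}, v_k)`
    have hcol := ((columnStrictBefore_succ_iff (by omega) (by omega)).1 h).2
    rw [splice_of_le _ le_rfl, splice_of_lt _ k.lt_succ_self] at hcol
    exact hcol.not_ge (hv (Fin.mk_le_mk.2 (by omega)))

theorem tailSwapInv_mem {u : Fin (a + 1) → α} {v : Fin (b - 1) → α} (hu : Monotone u)
    (hv : Monotone v) (hlt : ColumnStrictBefore v u k)
    (hge : ¬(ColumnStrictBefore v u (k + 1) ∧ k + 1 < b)) :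
    Monotone (tailSwapInv k hk hba (u, v)).1 ∧ Monotone (tailSwapInv k hk hba (u, v)).2 ∧
      ColumnStrictBefore (tailSwapInv k hk hba (u, v)).1 (tailSwapInv k hk hba (u, v)).2 k ∧
      ¬ColumnStrictBefore (tailSwapInv k hk hba (u, v)).1 (tailSwapInv k hk hba (u, v)).2
        (k + 1) := by
  dsimp only [tailSwapInv]
  refine ⟨monotone_splice hv hu ?_, monotone_splice hu hv ?_, hlt.splice le_rfl k.le_succ, ?_⟩
  · intro i j hi hj
    exact (hlt i hi (by omega) i.2).le.trans (hu (Fin.mk_le_mk.2 (by omega)))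
  · intro i j hi hj
    have huv : u ⟨k, by omega⟩ ≤ v ⟨k, by omega⟩ :=
      not_lt.1 fun h => hge ⟨(columnStrictBefore_succ_iff _ _).2 ⟨hlt, h⟩, by omega⟩
    calc u i ≤ u ⟨k, by omega⟩ := hu (Fin.mk_le_mk.2 (by omega))
      _ ≤ v ⟨k, by omega⟩ := huv
      _ ≤ v j := hv (Fin.mk_le_mk.2 (by omega))
  · intro h
    -- column `k` of the swapped pair is `(u_{k+1}, u_k)`
    have hcol := ((columnStrictBefore_succ_iff hk (by omega)).1 h).2
    rw [splice_of_le _ le_rfl, splice_of_lt _ k.lt_succ_self] at hcol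
    exact hcol.not_ge (hu (Fin.mk_le_mk.2 (by omega)))

end TailSwap

theorem Finset.sum_filter_sub_sum_filter_eq_sum_range {ι M : Type*} [AddCommGroup M]
    (s : Finset ι) (f : ι → M) (P : ι → ℕ → Prop) [∀ x k, Decidable (P x k)]
    (hP : ∀ x ∈ s, ∀ k, P x (k + 1) → P x k) (N : ℕ) :
    ∑ x ∈ s with P x 0, f x - ∑ x ∈ s with P x N, f x =
      ∑ k ∈ range N, ∑ x ∈ s with P x k ∧ ¬P x (k + 1), f x := by
  simp only [sum_filter]
  rw [← sum_sub_distrib, sum_comm]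
  refine sum_congr rfl fun x hx => ?_
  rw [← sum_range_sub' (fun k => if P x k then f x else 0)]
  refine sum_congr rfl fun k _ => ?_
  by_cases h : P x (k + 1)
  · simp [h, hP x hx k h]
  · by_cases h' : P x k <;> simp [h, h']

section RowWeight

variable {α M : Type*} [CommMonoid M]

def rowWeight {a b : ℕ} (φ : α → M) (x : (Fin a → α) × (Fin b → α)) : M :=
  (∏ i, φ (x.1 i)) * ∏ j, φ (x.2 j)

theorem rowWeight_tailSwap {a b k : ℕ} {hk : k < b} {hba : b ≤ a} (φ : α → M)
    (x : (Fin a → α) × (Fin b → α)) : rowWeight φ (tailSwap k hk hba x) = rowWeight φ x := by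
  have hprod : ∀ {p} (f : Fin p → α), ∏ i, φ (f i) = ((List.ofFn f).map φ).prod := fun f => by
    rw [List.map_ofFn, List.prod_ofFn]; rfl
  simp only [rowWeight, tailSwap, hprod]
  rw [ofFn_splice (by omega), ofFn_splice (by omega), show k + 1 + a - (a + 1) = k by omega,
    show k + b - (b - 1) = k + 1 by omega]
  conv_rhs => rw [← List.take_append_drop k (List.ofFn x.1),
    ← List.take_append_drop (k + 1) (List.ofFn x.2)]
  simp only [List.map_append, List.prod_append]
  ac_rfl

end RowWeight

section RowPairs

variable (α : Type*) [Fintype α] [LinearOrder α] {R : Type*} [CommSemiring R]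

def rowPairs (a b : ℕ) : Finset ((Fin a → α) × (Fin b → α)) :=
  univ.filter Monotone ×ˢ univ.filter Monotone

variable {α}

open Classical in
theorem sum_rowWeight_tailSwap {a b k : ℕ} (hk : k < b) (hba : b ≤ a) (φ : α → R) :
    ∑ x ∈ rowPairs α a b with
        ColumnStrictBefore x.1 x.2 k ∧ ¬ColumnStrictBefore x.1 x.2 (k + 1), rowWeight φ x =
      ∑ y ∈ rowPairs α (a + 1) (b - 1) with
        (ColumnStrictBefore y.2 y.1 k ∧ k < b) ∧ ¬(ColumnStrictBefore y.2 y.1 (k + 1) ∧ k + 1 < b),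
        rowWeight φ y := by
  refine sum_nbij' (tailSwap k hk hba) (tailSwapInv k hk hba) ?_ ?_
    (fun x _ => tailSwapInv_tailSwap x) (fun y _ => tailSwap_tailSwapInv y)
    (fun x _ => (rowWeight_tailSwap φ x).symm)
  · rintro ⟨u, v⟩ hx
    simp only [rowPairs, mem_filter, mem_product, mem_univ, true_and] at hx ⊢
    obtain ⟨⟨hu, hv⟩, hlt, hge⟩ := hx
    obtain ⟨hu', hv', h⟩ := tailSwap_mem (hk := hk) (hba := hba) hu hv hlt hge
    exact ⟨⟨hu', hv'⟩, h⟩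
  · rintro ⟨u, v⟩ hy
    simp only [rowPairs, mem_filter, mem_product, mem_univ, true_and] at hy ⊢
    obtain ⟨⟨hu, hv⟩, ⟨hlt, -⟩, hge⟩ := hy
    obtain ⟨hu', hv', h⟩ := tailSwapInv_mem (hk := hk) (hba := hba) hu hv hlt hge
    exact ⟨⟨hu', hv'⟩, h⟩

end RowPairs

theorem hsymm_mul_hsymm {σ R : Type*} [Fintype σ] [LinearOrder σ] [CommSemiring R] (a b : ℕ) :
    hsymm σ R a * hsymm σ R b = ∑ x ∈ rowPairs σ a b, rowWeight X x := by
  rw [hsymm_eq_sum_monotone, hsymm_eq_sum_monotone, sum_mul_sum, rowPairs, sum_product]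
  rfl

open Classical in
theorem schurTab_eq_sum_rowPairs (n a b : ℕ) :
    schurTab n a b =
      ∑ x ∈ rowPairs (Fin n) a b with ColumnStrictBefore x.1 x.2 b, rowWeight X x := by
  refine sum_congr (ext fun x => ?_) fun _ _ => rfl
  simp only [rowPairs, mem_filter, mem_product, mem_univ, true_and, and_assoc]
  exact and_congr_right' <| and_congr_right' ⟨fun h i _ => h i, fun h i hb => h i hb hb⟩

open Classical in
theorem hh_mul_hh_sub_schurTab (n a b : ℕ) :
    hh n a * hh n b - schurTab n a b = ∑ k ∈ range b, ∑ x ∈ rowPairs (Fin n) a b with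
      ColumnStrictBefore x.1 x.2 k ∧ ¬ColumnStrictBefore x.1 x.2 (k + 1), rowWeight X x := by
  have h := sum_filter_sub_sum_filter_eq_sum_range (rowPairs (Fin n) a b)
    (rowWeight (X (R := ℤ))) (fun x k => ColumnStrictBefore x.1 x.2 k)
    (fun _ _ k h => h.of_le k.le_succ) b
  rwa [filter_true_of_mem fun x _ i hi => absurd hi i.not_lt_zero, ← hsymm_mul_hsymm,
    ← hh_eq_hsymm, ← hh_eq_hsymm, ← schurTab_eq_sum_rowPairs] at h

open Classical in
theorem hh_succ_mul_hh_pred (n a : ℕ) {b : ℕ} (hb : 0 < b) :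
    hh n (a + 1) * hh n (b - 1) = ∑ k ∈ range b, ∑ y ∈ rowPairs (Fin n) (a + 1) (b - 1) with
      (ColumnStrictBefore y.2 y.1 k ∧ k < b) ∧ ¬(ColumnStrictBefore y.2 y.1 (k + 1) ∧ k + 1 < b),
      rowWeight X y := by
  have h := sum_filter_sub_sum_filter_eq_sum_range (rowPairs (Fin n) (a + 1) (b - 1))
    (rowWeight (X (R := ℤ))) (fun y k => ColumnStrictBefore y.2 y.1 k ∧ k < b)
    (fun _ _ k h => ⟨h.1.of_le k.le_succ, by omega⟩) b
  rwa [filter_true_of_mem fun x _ => ⟨fun i hi => absurd hi i.not_lt_zero, hb⟩,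
    filter_false_of_mem fun x _ h => h.2.false, sum_empty, sub_zero, ← hsymm_mul_hsymm,
    ← hh_eq_hsymm, ← hh_eq_hsymm] at h

theorem hhZ_natCast (n d : ℕ) : hhZ n d = hh n d := by
  simp [hhZ]

theorem hhZ_of_neg (n : ℕ) {d : ℤ} (hd : d < 0) : hhZ n d = 0 :=
  if_neg hd.not_ge

theorem schurTab_eq_hh_mul_hh_sub (n : ℕ) {a b : ℕ} (hba : b ≤ a) :
    schurTab n a b = hh n a * hh n b - hh n (a + 1) * hhZ n ((b : ℤ) - 1) := by
  have hdiff := hh_mul_hh_sub_schurTab n a b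
  rcases b.eq_zero_or_pos with rfl | hb
  · rw [hhZ_of_neg n (by omega), mul_zero, sub_zero]
    simpa [sub_eq_zero, eq_comm] using hdiff
  · rw [show (b : ℤ) - 1 = (b - 1 : ℕ) by omega, hhZ_natCast, hh_succ_mul_hh_pred n a hb,
      ← sum_congr rfl fun k hk => sum_rowWeight_tailSwap (mem_range.1 hk) hba X, ← hdiff,
      sub_sub_cancel]

theorem hh_mul_hh_eq_sum_schurTab (n : ℕ) {a b : ℕ} (hba : b ≤ a) :
    hh n a * hh n b = ∑ i ∈ range (b + 1), schurTab n (a + b - i) i := by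
  let g : ℕ → MvPolynomial (Fin n) ℤ := fun i => hh n (a + b + 1 - i) * hhZ n ((i : ℤ) - 1)
  have hstep : ∀ i ∈ range (b + 1), schurTab n (a + b - i) i = g (i + 1) - g i := by
    intro i hi
    rw [mem_range] at hi
    rw [schurTab_eq_hh_mul_hh_sub n (by omega)]
    simp only [g, show a + b + 1 - (i + 1) = a + b - i by omega, Nat.cast_add_one,
      add_sub_cancel_right, hhZ_natCast, show a + b - i + 1 = a + b + 1 - i by omega]
  rw [sum_congr rfl hstep, sum_range_sub]
  simp only [g, show a + b + 1 - (b + 1) = a by omega, Nat.cast_add_one, add_sub_cancel_right,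
    hhZ_natCast, hhZ_of_neg n (show ((0 : ℕ) : ℤ) - 1 < 0 by omega), mul_zero, sub_zero]

/-- `s_{(a,b)} = ∑_{T ∈ Tab_n(a,b)} t^T` satisfies
`s_{(a,b)} = h_a h_b − h_{a+1} h_{b-1}`, and Pieri's rule for two-row shapes:
`h_a·h_b = ∑_{i=0}^{b} s_{(a+b-i,i)}` for `a ≥ b`. -/
theorem schur_two_row_identities (n a b : ℕ) (hab : b ≤ a) :
    schurTab n a b = hh n a * hh n b - hh n (a + 1) * hhZ n ((b : ℤ) - 1) ∧
    hh n a * hh n b = ∑ i ∈ Finset.range (b + 1), schurTab n (a + b - i) i :=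
  ⟨schurTab_eq_hh_mul_hh_sub n hab, hh_mul_hh_eq_sum_schurTab n hab⟩
end

section
/- Let R = k[x_1,...,x_n,y_1,...,y_n], I the ideal of 2×2 minors x_i y_j − x_j y_i of the generic 2×n matrix, and for a semi-standard tableau T of shape (a,b) (a ≥ b) define G_T = (Π_{i=1}^{b} (x_{u_i} y_{v_i} − x_{v_i} y_{u_i})) · x_{u_{b+1}}···x_{u_a}. Then the leading term of G_T with respect to the graded lexicographic order with x_1 > ... > x_n > y_1 > ... > y_n is the monomial M_T = x_{u_1}···x_{u_a}·y_{v_1}···y_{v_b}. Consequently, the polynomials {G_T : T ∈ Tab_n(a,b)} are linearly independent over k. -/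
open MvPolynomial

/-- Variables of `R = k[x_1,…,x_n,y_1,…,y_n]`: `Sum.inl i` is `x_{i+1}`,
`Sum.inr j` is `y_{j+1}`. -/
abbrev Vars (n : ℕ) := Fin n ⊕ Fin n

/-- The rank of a variable in the order `x_1 > x_2 > ⋯ > x_n > y_1 > ⋯ > y_n`:
smaller rank means a more important (larger) variable. -/
def varRank {n : ℕ} : Vars n → ℕ := Sum.elim (fun i => (i : ℕ)) (fun j => n + (j : ℕ))

/-- Graded lexicographic comparison of exponent vectors: `c < c'` iff `c` has smaller
total degree, or equal total degree and, at the most important variable where they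
differ, `c` has the smaller exponent. -/
def GrlexLT {n : ℕ} (c c' : Vars n →₀ ℕ) : Prop :=
  (c.sum fun _ e => e) < (c'.sum fun _ e => e) ∨
  ((c.sum fun _ e => e) = (c'.sum fun _ e => e) ∧
    ∃ v : Vars n, c v < c' v ∧ ∀ w : Vars n, varRank w < varRank v → c w = c' w)

/-- Semi-standard tableaux of shape `(a,b)` (with `b ≤ a`): rows `u, v` weakly
increasing, columns strictly increasing. -/
def IsSSYT {n a b : ℕ} (hba : b ≤ a) (u : Fin a → Fin n) (v : Fin b → Fin n) : Prop :=
  Monotone u ∧ Monotone v ∧ ∀ i : Fin b, u (Fin.castLE hba i) < v i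

/-- `G_T = (∏_{i=1}^{b} (x_{u_i} y_{v_i} − x_{v_i} y_{u_i})) · x_{u_{b+1}} ⋯ x_{u_a}`. -/
noncomputable def GT {n a b : ℕ} (K : Type*) [Field K] (hba : b ≤ a)
    (u : Fin a → Fin n) (v : Fin b → Fin n) : MvPolynomial (Vars n) K :=
  (∏ i : Fin b,
    (X (Sum.inl (u (Fin.castLE hba i))) * X (Sum.inr (v i)) -
     X (Sum.inl (v i)) * X (Sum.inr (u (Fin.castLE hba i))))) *
  ∏ i ∈ Finset.univ.filter (fun i : Fin a => b ≤ (i : ℕ)), X (Sum.inl (u i))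

/-- The exponent vector of the monomial `M_T = x_{u_1} ⋯ x_{u_a} · y_{v_1} ⋯ y_{v_b}`. -/
noncomputable def MT {n a b : ℕ} (u : Fin a → Fin n) (v : Fin b → Fin n) : Vars n →₀ ℕ :=
  (∑ i : Fin a, Finsupp.single (Sum.inl (u i)) 1) +
  ∑ j : Fin b, Finsupp.single (Sum.inr (v j)) 1

/-! Each factor `x_{u_i} y_{v_i} − x_{v_i} y_{u_i}` is monic for grlex with leading monomial
`x_{u_i} y_{v_i}`, because `u_i < v_i` makes `x_{u_i}` the most important variable in which the two
monomials differ. Leading monomials multiply, so `G_T` is monic with leading monomial `M_T`. Since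
the rows of `T` are weakly increasing, `M_T` determines `T`, and polynomials with pairwise distinct
leading monomials are linearly independent: the largest leading monomial occurring in a
nontrivial relation cannot cancel. -/

open scoped MonomialOrder

namespace MonomialOrder

variable {σ τ R : Type*}

noncomputable def domCongr (e : σ ≃ τ) (m : MonomialOrder τ) : MonomialOrder σ where
  syn := m.syn
  toSyn := (Finsupp.domCongr e).trans m.toSyn
  toSyn_monotone _ _ h := by
    refine m.toSyn_monotone (Finsupp.le_def.2 fun t => ?_)
    simpa using h (e.symm t)

lemma domCongr_lt_iff (e : σ ≃ τ) (m : MonomialOrder τ) {c c' : σ →₀ ℕ} :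
    c ≺[m.domCongr e] c' ↔ c.equivMapDomain e ≺[m] c'.equivMapDomain e := Iff.rfl

lemma degree_monomial_one [CommSemiring R] [Nontrivial R] (m : MonomialOrder σ) (d : σ →₀ ℕ) :
    m.degree (monomial d (1 : R)) = d := by
  classical
  rw [degree_monomial, if_neg one_ne_zero]

theorem linearIndependent_of_injective_degree [CommRing R] [NoZeroDivisors R]
    (m : MonomialOrder σ) {ι : Type*} {f : ι → MvPolynomial σ R} (hf : ∀ i, f i ≠ 0)
    (hdeg : Function.Injective fun i => m.degree (f i)) : LinearIndependent R f := by
  classical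
  refine linearIndependent_iff.2 fun l hl => ?_
  by_contra hl0
  obtain ⟨i₀, hi₀, hmax⟩ := l.support.exists_max_image (fun i => m.toSyn (m.degree (f i)))
    (Finsupp.support_nonempty_iff.2 hl0)
  have hlt : ∀ i ∈ l.support, i ≠ i₀ → m.degree (f i) ≺[m] m.degree (f i₀) := fun i hi hne =>
    (hmax i hi).lt_of_ne fun h => hne (hdeg (m.toSyn.injective h))
  have hcoeff : (Finsupp.linearCombination R f l).coeff (m.degree (f i₀)) =
      l i₀ * m.leadingCoeff (f i₀) := by
    rw [Finsupp.linearCombination_apply, Finsupp.sum, coeff_sum, Finset.sum_eq_single i₀]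
    · rw [coeff_smul, smul_eq_mul, leadingCoeff]
    · intro i hi hne
      rw [coeff_smul, m.coeff_eq_zero_of_lt (hlt i hi hne), smul_zero]
    · exact fun h => absurd hi₀ h
  rw [hl, coeff_zero, eq_comm] at hcoeff
  exact mul_ne_zero (Finsupp.mem_support_iff.1 hi₀) (m.leadingCoeff_ne_zero_iff.2 (hf i₀)) hcoeff

end MonomialOrder

lemma MvPolynomial.X_mul_X_eq_monomial {σ R : Type*} [CommSemiring R] (a b : σ) :
    (X a * X b : MvPolynomial σ R) = monomial (Finsupp.single a 1 + Finsupp.single b 1) 1 := by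
  rw [X, X, monomial_mul, one_mul]

lemma Fin.sum_univ_eq_sum_castLE_add_sum_filter {M : Type*} [AddCommMonoid M] {a b : ℕ}
    (h : b ≤ a) (f : Fin a → M) :
    ∑ i, f i = ∑ i : Fin b, f (Fin.castLE h i) +
      ∑ i ∈ Finset.univ.filter (fun i : Fin a => b ≤ (i : ℕ)), f i := by
  rw [← Finset.sum_filter_add_sum_filter_not Finset.univ (fun i : Fin a => (i : ℕ) < b)]
  congr 1
  · have : Finset.univ.filter (fun i : Fin a => (i : ℕ) < b) =
        Finset.univ.map (Fin.castLEEmb h) := by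
      ext i
      simpa using ⟨fun hi => ⟨⟨i, hi⟩, rfl⟩, by rintro ⟨j, rfl⟩; exact j.isLt⟩
    rw [this, Finset.sum_map]
    rfl
  · simp [not_lt]

lemma Monotone.eq_of_card_fiber_eq {α : Type*} [LinearOrder α] {a : ℕ} {u u' : Fin a → α}
    (hu : Monotone u) (hu' : Monotone u')
    (h : ∀ w, (Finset.univ.filter (u · = w)).card = (Finset.univ.filter (u' · = w)).card) :
    u = u' := by
  classical
  have hperm : (List.ofFn u).Perm (List.ofFn u') := by
    rw [← Multiset.coe_eq_coe, ← Fin.univ_val_map, ← Fin.univ_val_map]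
    ext w
    simpa only [Multiset.count_map, Finset.card_def, Finset.filter_val, eq_comm] using h w
  exact List.ofFn_injective <| hperm.eq_of_pairwise' (List.pairwise_ofFn.2 fun _ _ hij => hu hij.le)
    (List.pairwise_ofFn.2 fun _ _ hij => hu' hij.le)

/-- `finSumFinEquiv` sends `x_{i+1}` to `i` and `y_{j+1}` to `n + j`, and `degLex` ranks smaller
indices higher, so this is grlex with `x_1 > ⋯ > x_n > y_1 > ⋯ > y_n`. -/
noncomputable def grlex (n : ℕ) : MonomialOrder (Vars n) :=
  MonomialOrder.degLex.domCongr finSumFinEquiv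

lemma varRank_eq_finSumFinEquiv {n : ℕ} (w : Vars n) : varRank w = finSumFinEquiv w := by
  cases w <;> simp [varRank, add_comm]

lemma grlex_lt_iff {n : ℕ} {c c' : Vars n →₀ ℕ} : c ≺[grlex n] c' ↔ GrlexLT c c' := by
  have hdeg (d : Vars n →₀ ℕ) : (d.equivMapDomain finSumFinEquiv).degree = d.sum fun _ e => e := by
    rw [Finsupp.equivMapDomain_eq_mapDomain, Finsupp.degree_mapDomain]; rfl
  rw [grlex, MonomialOrder.domCongr_lt_iff, MonomialOrder.degLex_lt_iff, Finsupp.DegLex.lt_iff,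
    Finsupp.Lex.lt_iff, GrlexLT, ofDegLex_toDegLex, ofDegLex_toDegLex, hdeg, hdeg,
    finSumFinEquiv.symm.exists_congr_left]
  simp only [Equiv.symm_symm, ofLex_toLex, Finsupp.equivMapDomain_apply, Equiv.symm_apply_apply,
    finSumFinEquiv.symm.forall_congr_left, Fin.lt_def, ← varRank_eq_finSumFinEquiv, and_comm]

section minor

variable {R : Type*} [CommRing R] {n : ℕ} {i j : Fin n}

lemma grlex_lt_minor_exponents (hij : i < j) :
    Finsupp.single (Sum.inl j) 1 + Finsupp.single (Sum.inr i) 1 ≺[grlex n]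
      Finsupp.single (Sum.inl i) 1 + Finsupp.single (Sum.inr j) 1 := by
  rw [grlex_lt_iff]
  refine Or.inr ⟨by simp [Finsupp.sum_add_index'], Sum.inl i, by simp [hij.ne'], ?_⟩
  rintro (w | w) hw
  · simp [(Fin.lt_def.2 hw).ne', ((Fin.lt_def.2 hw).trans hij).ne']
  · exact absurd hw (Nat.not_lt.2 (i.isLt.le.trans (Nat.le_add_right n w)))

theorem degree_grlex_minor [Nontrivial R] (hij : i < j) :
    (grlex n).degree (X (Sum.inl i) * X (Sum.inr j) - X (Sum.inl j) * X (Sum.inr i) :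
      MvPolynomial (Vars n) R) = Finsupp.single (Sum.inl i) 1 + Finsupp.single (Sum.inr j) 1 := by
  rw [X_mul_X_eq_monomial, X_mul_X_eq_monomial, MonomialOrder.degree_sub_of_lt,
    MonomialOrder.degree_monomial_one]
  simpa only [MonomialOrder.degree_monomial_one] using grlex_lt_minor_exponents hij

theorem monic_grlex_minor (hij : i < j) :
    (grlex n).Monic (X (Sum.inl i) * X (Sum.inr j) - X (Sum.inl j) * X (Sum.inr i) :
      MvPolynomial (Vars n) R) := by
  nontriviality R
  rw [X_mul_X_eq_monomial, X_mul_X_eq_monomial, MonomialOrder.Monic,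
    MonomialOrder.leadingCoeff_sub_of_lt, MonomialOrder.leadingCoeff_monomial]
  simpa only [MonomialOrder.degree_monomial_one] using grlex_lt_minor_exponents hij

end minor

section GT

variable {K : Type*} [Field K] {n a b : ℕ} (hba : b ≤ a) {u : Fin a → Fin n} {v : Fin b → Fin n}

theorem monic_GT (hcol : ∀ i, u (Fin.castLE hba i) < v i) : (grlex n).Monic (GT K hba u v) :=
  (MonomialOrder.Monic.prod fun i _ => monic_grlex_minor (hcol i)).mul
    (MonomialOrder.Monic.prod fun _ _ => MonomialOrder.monic_X)

theorem degree_GT (hcol : ∀ i, u (Fin.castLE hba i) < v i) :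
    (grlex n).degree (GT K hba u v) = MT u v := by
  have hX : (grlex n).Monic (∏ i ∈ Finset.univ.filter (fun i : Fin a => b ≤ (i : ℕ)),
      (X (Sum.inl (u i)) : MvPolynomial (Vars n) K)) :=
    MonomialOrder.Monic.prod fun _ _ => MonomialOrder.monic_X
  rw [GT, MonomialOrder.degree_mul
    (MonomialOrder.Monic.prod fun i _ => monic_grlex_minor (hcol i)).ne_zero hX.ne_zero,
    MonomialOrder.degree_prod fun i _ => (monic_grlex_minor (hcol i)).ne_zero,
    MonomialOrder.degree_prod fun _ _ => X_ne_zero _]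
  simp only [degree_grlex_minor (hcol _), MonomialOrder.degree_X]
  rw [MT, Fin.sum_univ_eq_sum_castLE_add_sum_filter hba, Finset.sum_add_distrib]
  abel

end GT

section MT

variable {n a b : ℕ}

lemma MT_apply_inl (u : Fin a → Fin n) (v : Fin b → Fin n) (w : Fin n) :
    MT u v (Sum.inl w) = (Finset.univ.filter (u · = w)).card := by
  simp [MT, Finsupp.single_apply]

lemma MT_apply_inr (u : Fin a → Fin n) (v : Fin b → Fin n) (w : Fin n) :
    MT u v (Sum.inr w) = (Finset.univ.filter (v · = w)).card := by
  simp [MT, Finsupp.single_apply]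

lemma eq_of_MT_eq_of_monotone {u u' : Fin a → Fin n} {v v' : Fin b → Fin n}
    (hu : Monotone u) (hu' : Monotone u') (hv : Monotone v) (hv' : Monotone v')
    (h : MT u v = MT u' v') : u = u' ∧ v = v' :=
  ⟨hu.eq_of_card_fiber_eq hu' fun w => by rw [← MT_apply_inl u v, h, MT_apply_inl],
    hv.eq_of_card_fiber_eq hv' fun w => by rw [← MT_apply_inr u v, h, MT_apply_inr]⟩

end MT

/-- for every semi-standard tableau `T` of shape `(a,b)`, the leading
term of `G_T` with respect to the graded lexicographic order with
`x_1 > ⋯ > x_n > y_1 > ⋯ > y_n` is the monomial `M_T` (with coefficient `1`), and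
consequently the family `{G_T : T ∈ Tab_n(a,b)}` is linearly independent over `K`. -/
theorem GT_leading_term_and_linearIndependent (K : Type*) [Field K] (n a b : ℕ)
    (hba : b ≤ a) :
    (∀ (u : Fin a → Fin n) (v : Fin b → Fin n), IsSSYT hba u v →
      MvPolynomial.coeff (MT u v) (GT K hba u v) = 1 ∧
      ∀ c ∈ (GT K hba u v).support, c ≠ MT u v → GrlexLT c (MT u v)) ∧
    LinearIndependent K
      (fun T : {T : (Fin a → Fin n) × (Fin b → Fin n) // IsSSYT hba T.1 T.2} =>
        GT K hba T.1.1 T.1.2) := by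
  refine ⟨fun u v hT => ⟨?_, fun c hc hne => ?_⟩, ?_⟩
  · rw [← degree_GT (K := K) hba hT.2.2]
    exact (monic_GT hba hT.2.2).coeff_degree
  · rw [← degree_GT (K := K) hba hT.2.2] at hne ⊢
    exact grlex_lt_iff.1 <|
      ((grlex n).le_degree hc).lt_of_ne fun h => hne ((grlex n).toSyn.injective h)
  · refine (grlex n).linearIndependent_of_injective_degree (fun T => (monic_GT hba T.2.2.2).ne_zero)
      fun T T' h => ?_
    simp only [degree_GT hba T.2.2.2, degree_GT hba T'.2.2.2] at h
    obtain ⟨hu, hv⟩ := eq_of_MT_eq_of_monotone T.2.1 T'.2.1 T.2.2.1 T'.2.2.1 h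
    exact Subtype.ext (Prod.ext hu hv)
end
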